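/- Let k be an algebraically closed field of characteristic p > 0, g a finite-dimensional restricted Lie algebra, m ≥ 1, and g_m = g ⊗ k[t]/(t^{m+1}) with p-mapping (x t^i)^{[p]} = x^{[p]} t^{pi} (zero if pi > m). Fix 0 ≤ k' ≤ m and χ ∈ g_m^* vanishing on g ⊗ span(t^{k'+1}, ..., t^m). Let ψ be the restriction of χ to g_{k'} identified with g ⊗ span(1, t, ..., t^{k'}). Then dim g_m − dim g_m^χ = dim g_{k'} − dim g_{k'}^ψ, where g_m^χ = {x ∈ g_m : χ([x, g_m]) = 0} is the coadjoint stabiliser. -/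

import Mathlib

/-! The span `I` of the `t ^ i ⊗ x` with `i > k'` is an ideal of `g_m` on which `χ` vanishes, so
`I ≤ g_m^χ`. As `g_m = S + I`, this gives `g_m^χ = g_{k'}^ψ + I` and
`S ∩ I = g_{k'}^ψ ∩ I`, and the dimension formula for a sum of subspaces turns these into
`dim g_m - dim g_m^χ = dim S - dim g_{k'}^ψ`. -/

open TensorProduct Polynomial

section

variable {k : Type*} [Field k] {g : Type*} [LieRing g] [LieAlgebra k g] {m : ℕ}

noncomputable instance : LieAlgebra k (AdjoinRoot ((X : Polynomial k) ^ (m + 1)) ⊗[k] g) where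
  lie_smul c x y := by
    rw [← algebraMap_smul (AdjoinRoot ((X : Polynomial k) ^ (m + 1))) c y, lie_smul,
      algebraMap_smul]

variable (k)

/-- The coadjoint stabiliser `L^χ = {x ∈ L : χ(⁅x, L⁆) = 0}` of a functional `χ`. -/
def coadjointStab {L : Type*} [LieRing L] [LieAlgebra k L] (χ : L →ₗ[k] k) :
    Submodule k L where
  carrier := {x | ∀ y : L, χ ⁅x, y⁆ = 0}
  add_mem' := by intro a b ha hb y; rw [add_lie, map_add, ha, hb, add_zero]
  zero_mem' := by intro y; rw [zero_lie, map_zero]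
  smul_mem' := by intro c a ha y; rw [smul_lie, map_smul, ha, smul_zero]

/-- The relative coadjoint stabiliser `{x ∈ S : χ(⁅x, S⁆) = 0}` inside a subalgebra with
underlying subspace `S`. -/
def coadjointStabIn {L : Type*} [LieRing L] [LieAlgebra k L] (S : Submodule k L)
    (χ : L →ₗ[k] k) : Submodule k L where
  carrier := {x | x ∈ S ∧ ∀ y ∈ S, χ ⁅x, y⁆ = 0}
  add_mem' := by
    intro a b ha hb
    exact ⟨S.add_mem ha.1 hb.1, fun y hy => by rw [add_lie, map_add, ha.2 y hy, hb.2 y hy,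
      add_zero]⟩
  zero_mem' := ⟨S.zero_mem, fun y _ => by rw [zero_lie, map_zero]⟩
  smul_mem' := by
    intro c a ha
    exact ⟨S.smul_mem c ha.1, fun y hy => by rw [smul_lie, map_smul, ha.2 y hy, smul_zero]⟩

section

variable {k}

theorem Submodule.finrank_sub_finrank_sup_eq {K V : Type*} [DivisionRing K] [AddCommGroup V]
    [Module K V] [FiniteDimensional K V] {S N I : Submodule K V} (hSI : S ⊔ I = ⊤) (hNS : N ≤ S)
    (hSIN : S ⊓ I ≤ N) :
    Module.finrank K V - Module.finrank K ↥(N ⊔ I) = Module.finrank K S - Module.finrank K N := by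
  have hS := Submodule.finrank_sup_add_finrank_inf_eq S I
  have hN := Submodule.finrank_sup_add_finrank_inf_eq N I
  have hNI : N ⊓ I = S ⊓ I := le_antisymm (inf_le_inf_right I hNS) (le_inf hSIN inf_le_right)
  rw [hSI, finrank_top] at hS
  rw [hNI] at hN
  have := Submodule.finrank_mono hNS
  omega

theorem TensorProduct.span_image2_tmul_eq_top {R M N : Type*} [CommSemiring R] [AddCommMonoid M]
    [AddCommMonoid N] [Module R M] [Module R N] {s : Set M} {t : Set N}
    (hs : Submodule.span R s = ⊤) (ht : Submodule.span R t = ⊤) :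
    Submodule.span R (Set.image2 (· ⊗ₜ[R] ·) s t) = ⊤ := by
  have h := Submodule.map₂_span_span R (mk R M N) s t
  rw [hs, ht, map₂_mk_top_top_eq_top] at h
  exact h.symm

theorem AdjoinRoot.span_range_root_pow_eq_top {R : Type*} [CommRing R] (f : R[X]) :
    Submodule.span R (Set.range (root f ^ · : ℕ → AdjoinRoot f)) = ⊤ := by
  have h := congrArg Subalgebra.toSubmodule (adjoinRoot_eq_top (f := f))
  rw [Algebra.adjoin_eq_span, Algebra.top_toSubmodule] at h
  convert h
  ext y
  simp [Submonoid.mem_closure_singleton]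

theorem AdjoinRoot.span_root_pow_tmul_eq_top {R M : Type*} [CommRing R] [AddCommMonoid M]
    [Module R M] (f : R[X]) :
    Submodule.span R {z : AdjoinRoot f ⊗[R] M | ∃ (i : ℕ) (x : M), z = (root f ^ i) ⊗ₜ[R] x} =
      ⊤ := by
  rw [← TensorProduct.span_image2_tmul_eq_top (span_range_root_pow_eq_top f) Submodule.span_univ]
  congr 1
  ext z
  simp [eq_comm]

section Stabiliser

variable {L : Type*} [LieRing L] [LieAlgebra k L] {χ : L →ₗ[k] k} {S I : Submodule k L}

theorem coadjointStabIn_le : coadjointStabIn k S χ ≤ S := fun _ hx => hx.1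

theorem le_coadjointStab_of_lie_mem (hlie : ∀ u ∈ I, ∀ y, ⁅u, y⁆ ∈ I) (hχ : ∀ u ∈ I, χ u = 0) :
    I ≤ coadjointStab k χ :=
  fun u hu y => hχ _ (hlie u hu y)

theorem lie_mem_span_of_forall_lie_mem_span {s t : Set L} (hs : Submodule.span k s = ⊤)
    (h : ∀ a ∈ t, ∀ b ∈ s, ⁅a, b⁆ ∈ Submodule.span k t) {u : L} (hu : u ∈ Submodule.span k t)
    (y : L) : ⁅u, y⁆ ∈ Submodule.span k t := by
  have hy : y ∈ Submodule.span k s := hs ▸ Submodule.mem_top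
  have := Submodule.apply_mem_map₂ (LieModule.toEnd k L L : L →ₗ[k] Module.End k L) hu hy
  rw [Submodule.map₂_span_span] at this
  refine Submodule.span_le.mpr ?_ (by simpa using this)
  rintro _ ⟨a, ha, b, hb, rfl⟩
  simpa using h a ha b hb

theorem coadjointStabIn_le_coadjointStab (hI : I ≤ coadjointStab k χ) (hSI : S ⊔ I = ⊤) :
    coadjointStabIn k S χ ≤ coadjointStab k χ := by
  rintro s ⟨-, hs⟩ y
  obtain ⟨y₁, hy₁, y₂, hy₂, rfl⟩ := Submodule.mem_sup.mp (hSI ▸ Submodule.mem_top : y ∈ S ⊔ I)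
  rw [lie_add, map_add, hs y₁ hy₁, ← lie_skew, map_neg, hI hy₂ s, neg_zero, add_zero]

theorem coadjointStab_eq_coadjointStabIn_sup (hI : I ≤ coadjointStab k χ) (hSI : S ⊔ I = ⊤) :
    coadjointStab k χ = coadjointStabIn k S χ ⊔ I := by
  refine le_antisymm (fun z hz => ?_) (sup_le (coadjointStabIn_le_coadjointStab hI hSI) hI)
  obtain ⟨s, hs, u, hu, rfl⟩ := Submodule.mem_sup.mp (hSI ▸ Submodule.mem_top : z ∈ S ⊔ I)
  have hs_stab : s ∈ coadjointStab k χ := by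
    simpa using (coadjointStab k χ).sub_mem hz (hI hu)
  exact Submodule.add_mem_sup ⟨hs, fun y _ => hs_stab y⟩ hu

theorem finrank_sub_finrank_coadjointStab_eq [FiniteDimensional k L]
    (hI : I ≤ coadjointStab k χ) (hSI : S ⊔ I = ⊤) :
    Module.finrank k L - Module.finrank k (coadjointStab k χ) =
      Module.finrank k S - Module.finrank k (coadjointStabIn k S χ) := by
  rw [coadjointStab_eq_coadjointStabIn_sup hI hSI]
  exact Submodule.finrank_sub_finrank_sup_eq hSI coadjointStabIn_le
    fun z hz => ⟨hz.1, fun y _ => hI hz.2 y⟩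

end Stabiliser

end

theorem reduction_by_degree_stabilizer_dimensions
    [FiniteDimensional k g]
    (m k' : ℕ) (χ : (AdjoinRoot ((X : Polynomial k) ^ (m + 1)) ⊗[k] g) →ₗ[k] k)
    (hχ : ∀ (i : ℕ), k' < i → ∀ x : g,
      χ ((AdjoinRoot.root ((X : Polynomial k) ^ (m + 1)) ^ i) ⊗ₜ[k] x) = 0) :
    letI A := AdjoinRoot ((X : Polynomial k) ^ (m + 1))
    letI t : A := AdjoinRoot.root _
    letI S : Submodule k (A ⊗[k] g) :=
      Submodule.span k {z | ∃ i : ℕ, i ≤ k' ∧ ∃ x : g, z = (t ^ i) ⊗ₜ[k] x}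
    Module.finrank k (A ⊗[k] g) - Module.finrank k (coadjointStab k χ) =
      Module.finrank k S - Module.finrank k (coadjointStabIn k S χ) := by
  set A := AdjoinRoot ((X : Polynomial k) ^ (m + 1))
  set t : A := AdjoinRoot.root _
  set S : Submodule k (A ⊗[k] g) :=
    Submodule.span k {z | ∃ i : ℕ, i ≤ k' ∧ ∃ x : g, z = (t ^ i) ⊗ₜ[k] x}
  set I : Submodule k (A ⊗[k] g) :=
    Submodule.span k {z | ∃ i : ℕ, k' < i ∧ ∃ x : g, z = (t ^ i) ⊗ₜ[k] x}
  have hspan := AdjoinRoot.span_root_pow_tmul_eq_top (M := g) ((X : Polynomial k) ^ (m + 1))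
  have hSI : S ⊔ I = ⊤ := by
    rw [eq_top_iff, ← hspan, Submodule.span_le]
    rintro _ ⟨i, x, rfl⟩
    rcases le_or_gt i k' with hi | hi
    · exact Submodule.mem_sup_left (Submodule.subset_span ⟨i, hi, x, rfl⟩)
    · exact Submodule.mem_sup_right (Submodule.subset_span ⟨i, hi, x, rfl⟩)
  have hI_ideal : ∀ u ∈ I, ∀ y, ⁅u, y⁆ ∈ I := by
    refine fun u hu => lie_mem_span_of_forall_lie_mem_span hspan ?_ hu
    rintro _ ⟨i, hi, x, rfl⟩ _ ⟨j, v, rfl⟩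
    rw [LieAlgebra.ExtendScalars.bracket_tmul, ← pow_add]
    exact Submodule.subset_span ⟨i + j, by omega, _, rfl⟩
  have hχI : ∀ u ∈ I, χ u = 0 := fun u hu => (Submodule.span_le (p := LinearMap.ker χ)).mpr
    (by rintro _ ⟨i, hi, x, rfl⟩; exact hχ i hi x) hu
  have : Module.Finite k A := (AdjoinRoot.powerBasis (pow_ne_zero (m + 1) X_ne_zero)).finite
  exact finrank_sub_finrank_coadjointStab_eq (le_coadjointStab_of_lie_mem hI_ideal hχI) hSI

end
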